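/- arXiv:1303.3771 — 9 statements merged into one kernel-verified Lean document; each statement's English description precedes it below -/
import Mathlib

section
/- Let Ω be an n×n Hermitian matrix, C an m×n complex matrix, and A = -iΩ - (1/2)C†C. The pair (A, C†) is controllable (i.e., for every left eigenvector y of A, yC† ≠ 0) if and only if the pair (A, C) is observable (i.e., for every eigenvector v of A, Cv ≠ 0). -/
open Matrix

private lemma star_row_mul {n m : ℕ} (M : Matrix (Fin n) (Fin m) ℂ) (v : Fin n → ℂ)
    (i : Fin m) :
    ((Matrix.of fun (_ : Fin 1) j => star (v j)) * M) 0 i = star (Mᴴ.mulVec v i) := by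
  simp only [Matrix.mulVec, Matrix.mul_apply, dotProduct, Matrix.conjTranspose_apply,
    Matrix.of_apply]
  rw [star_sum]
  simp [mul_comm]

private lemma row_mul_star {n m : ℕ} (M : Matrix (Fin n) (Fin m) ℂ)
    (y : Matrix (Fin 1) (Fin n) ℂ) (i : Fin m) :
    Mᴴ.mulVec (fun j => star (y 0 j)) i = star ((y * M) 0 i) := by
  simp only [Matrix.mulVec, Matrix.mul_apply, dotProduct, Matrix.conjTranspose_apply]
  rw [star_sum]
  simp [mul_comm]

theorem stmt1 {n m : ℕ} (Ω : Matrix (Fin n) (Fin n) ℂ) (hΩ : Ω.IsHermitian)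
    (C : Matrix (Fin m) (Fin n) ℂ)
    (A : Matrix (Fin n) (Fin n) ℂ)
    (hA : A = -(Complex.I • Ω) - (1/2 : ℂ) • (Cᴴ * C)) :
    (∀ (y : Matrix (Fin 1) (Fin n) ℂ) (lam : ℂ), y ≠ 0 → y * A = lam • y → y * Cᴴ ≠ 0) ↔
    (∀ (v : Fin n → ℂ) (μ : ℂ), v ≠ 0 → A.mulVec v = μ • v → C.mulVec v ≠ 0) := by
  have hAH : Aᴴ = Complex.I • Ω - (1/2 : ℂ) • (Cᴴ * C) := by
    rw [hA]
    simp [Matrix.conjTranspose_sub, Matrix.conjTranspose_smul, Matrix.conjTranspose_neg,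
      Matrix.conjTranspose_mul, Matrix.conjTranspose_conjTranspose, hΩ.eq,
      Complex.star_def, Complex.conj_I]
  constructor
  · intro ctrl v μ hv hAv hCv0
    have hCCv : (Cᴴ * C).mulVec v = 0 := by
      rw [← Matrix.mulVec_mulVec, hCv0, Matrix.mulVec_zero]
    have hΩv : Ω.mulVec v = (Complex.I * μ) • v := by
      have h1 : A.mulVec v = (-Complex.I) • Ω.mulVec v := by
        simp [hA, Matrix.sub_mulVec, Matrix.neg_mulVec, Matrix.smul_mulVec, hCCv,
          neg_smul]
      rw [h1] at hAv
      have h2 := congrArg (fun w => Complex.I • w) hAv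
      simpa [smul_smul, mul_neg, Complex.I_mul_I] using h2
    have hAHv : Aᴴ.mulVec v = (-μ) • v := by
      rw [hAH]
      simp [Matrix.sub_mulVec, Matrix.smul_mulVec, hCCv, hΩv, smul_smul,
        ← mul_assoc, Complex.I_mul_I]
    set y : Matrix (Fin 1) (Fin n) ℂ := Matrix.of fun _ j => star (v j) with hy
    have hyne : y ≠ 0 := by
      intro h
      apply hv
      funext j
      have := congrFun (congrFun h 0) j
      simpa [hy] using this
    have hyA : y * A = (-(starRingEnd ℂ) μ) • y := by
      ext i k
      have hi : i = 0 := Subsingleton.elim i 0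
      subst hi
      rw [hy, star_row_mul, hAHv]
      simp [mul_comm]
    have hyC := ctrl y (-(starRingEnd ℂ) μ) hyne hyA
    apply hyC
    ext i k
    have hi : i = 0 := Subsingleton.elim i 0
    subst hi
    rw [hy, star_row_mul]
    simp [hCv0]
  · intro obs y lam hy hyA hyC0
    have hyCC : y * (Cᴴ * C) = 0 := by
      rw [← Matrix.mul_assoc, hyC0, Matrix.zero_mul]
    have hyΩ : y * Ω = (Complex.I * lam) • y := by
      have h1 : y * A = (-Complex.I) • (y * Ω) := by
        rw [hA]
        simp [Matrix.mul_sub, Matrix.mul_smul, hyCC, neg_smul]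
      rw [h1] at hyA
      have h2 := congrArg (fun w => Complex.I • w) hyA
      simpa [smul_smul, mul_neg, Complex.I_mul_I] using h2
    have hyAH : y * Aᴴ = (-lam) • y := by
      rw [hAH]
      simp [Matrix.mul_sub, Matrix.mul_smul, hyCC, hyΩ, smul_smul,
        ← mul_assoc, Complex.I_mul_I]
    set v : Fin n → ℂ := fun j => star (y 0 j) with hv
    have hvne : v ≠ 0 := by
      intro h
      apply hy
      ext i j
      have hi : i = 0 := Subsingleton.elim i 0
      subst hi
      have := congrFun h j
      simpa [hv] using this
    have hAv : A.mulVec v = (-(starRingEnd ℂ) lam) • v := by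
      funext k
      have : A.mulVec v k = (Aᴴᴴ).mulVec v k := by rw [Matrix.conjTranspose_conjTranspose]
      rw [this, hv, row_mul_star, hyAH]
      simp [mul_comm]
    have hCv := obs v (-(starRingEnd ℂ) lam) hvne hAv
    apply hCv
    funext k
    have : C.mulVec v k = (Cᴴᴴ).mulVec v k := by rw [Matrix.conjTranspose_conjTranspose]
    rw [this, hv, row_mul_star, hyC0]
    simp
end

section
/- Let Ω be an n×n Hermitian matrix, C an m×n complex matrix, and A = -iΩ - (1/2)C†C. Then the matrix Ξ(iω) := I - C(iωI - A)^{-1}C† is unitary for every real ω such that iωI - A is invertible. -/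
open Matrix

theorem stmt4 {n m : ℕ} (Ω : Matrix (Fin n) (Fin n) ℂ) (hΩ : Ω.IsHermitian)
    (C : Matrix (Fin m) (Fin n) ℂ)
    (A : Matrix (Fin n) (Fin n) ℂ)
    (hA : A = -(Complex.I • Ω) - (1/2 : ℂ) • (Cᴴ * C))
    (ω : ℝ)
    (hinv : IsUnit (((ω : ℂ) * Complex.I) • (1 : Matrix (Fin n) (Fin n) ℂ) - A)) :
    (1 - C * (((ω : ℂ) * Complex.I) • (1 : Matrix (Fin n) (Fin n) ℂ) - A)⁻¹ * Cᴴ)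
      ∈ Matrix.unitaryGroup (Fin m) ℂ := by
  rw [Matrix.mem_unitaryGroup_iff]
  set M : Matrix (Fin n) (Fin n) ℂ :=
    ((ω : ℂ) * Complex.I) • (1 : Matrix (Fin n) (Fin n) ℂ) - A with hMdef
  have hdet : IsUnit M.det := (Matrix.isUnit_iff_isUnit_det M).mp hinv
  have hMN : M * M⁻¹ = 1 := Matrix.mul_nonsing_inv _ hdet
  have hNM : M⁻¹ * M = 1 := Matrix.nonsing_inv_mul _ hdet
  have hsum : Mᴴ + M = Cᴴ * C := by
    rw [hMdef, hA]
    simp only [Matrix.conjTranspose_sub, Matrix.conjTranspose_smul, Matrix.conjTranspose_one,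
      Matrix.conjTranspose_neg, Matrix.conjTranspose_mul, Matrix.conjTranspose_conjTranspose,
      hΩ.eq]
    have h1 : star ((ω : ℂ) * Complex.I) = -((ω : ℂ) * Complex.I) := by
      simp [Complex.ext_iff]
    have h2 : star Complex.I = -Complex.I := by simp [Complex.ext_iff]
    have h3 : star (1/2 : ℂ) = (1/2 : ℂ) := by norm_num
    rw [h1, h2, h3]
    module
  have h1 : Mᴴ * (M⁻¹)ᴴ = 1 := by
    rw [← Matrix.conjTranspose_mul, hNM, Matrix.conjTranspose_one]
  have hstar : star (1 - C * M⁻¹ * Cᴴ) = 1 - C * (M⁻¹)ᴴ * Cᴴ := by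
    simp only [Matrix.star_eq_conjTranspose, Matrix.conjTranspose_sub, Matrix.conjTranspose_one,
      Matrix.conjTranspose_mul, Matrix.conjTranspose_conjTranspose, Matrix.mul_assoc]
  rw [hstar]
  have hXY : (C * M⁻¹ * Cᴴ) * (C * (M⁻¹)ᴴ * Cᴴ)
      = C * M⁻¹ * Cᴴ + C * (M⁻¹)ᴴ * Cᴴ := by
    have hstep : (C * M⁻¹ * Cᴴ) * (C * (M⁻¹)ᴴ * Cᴴ)
        = C * (M⁻¹ * ((Mᴴ + M) * ((M⁻¹)ᴴ * Cᴴ))) := by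
      rw [hsum]; simp only [Matrix.mul_assoc]
    have h2 : M⁻¹ * ((Mᴴ + M) * ((M⁻¹)ᴴ * Cᴴ)) = M⁻¹ * Cᴴ + (M⁻¹)ᴴ * Cᴴ := by
      rw [Matrix.add_mul, ← Matrix.mul_assoc Mᴴ, h1, Matrix.one_mul, Matrix.mul_add,
        ← Matrix.mul_assoc M⁻¹ M, hNM, Matrix.one_mul]
    rw [hstep, h2, Matrix.mul_add, ← Matrix.mul_assoc, ← Matrix.mul_assoc]
  have expand : (1 - C * M⁻¹ * Cᴴ) * (1 - C * (M⁻¹)ᴴ * Cᴴ)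
      = 1 - C * M⁻¹ * Cᴴ - C * (M⁻¹)ᴴ * Cᴴ
        + (C * M⁻¹ * Cᴴ) * (C * (M⁻¹)ᴴ * Cᴴ) := by
    simp only [Matrix.sub_mul, Matrix.mul_sub, Matrix.one_mul, Matrix.mul_one]
    abel
  rw [expand, hXY]
  abel
end

section
/- Let Ω₁, Ω₂ be n×n Hermitian matrices, C₁, C₂ be m×n matrices, A_i = -iΩ_i - (1/2)C_i†C_i, and suppose T is an invertible n×n matrix with A₂ = TA₁T^{-1}, C₂† = TC₁†, and C₂ = C₁T^{-1}. Then T†T commutes with C₁†C₁, with Ω₁, and with A₁. -/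
open Matrix

theorem stmt5 {n m : ℕ}
    (Ω₁ Ω₂ : Matrix (Fin n) (Fin n) ℂ) (hΩ₁ : Ω₁.IsHermitian) (hΩ₂ : Ω₂.IsHermitian)
    (C₁ C₂ : Matrix (Fin m) (Fin n) ℂ)
    (A₁ A₂ : Matrix (Fin n) (Fin n) ℂ)
    (hA₁ : A₁ = -(Complex.I • Ω₁) - (1/2 : ℂ) • (C₁ᴴ * C₁))
    (hA₂ : A₂ = -(Complex.I • Ω₂) - (1/2 : ℂ) • (C₂ᴴ * C₂))
    (T : Matrix (Fin n) (Fin n) ℂ) (hT : IsUnit T)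
    (h1 : A₂ = T * A₁ * T⁻¹) (h2 : C₂ᴴ = T * C₁ᴴ) (h3 : C₂ = C₁ * T⁻¹) :
    Commute (Tᴴ * T) (C₁ᴴ * C₁) ∧ Commute (Tᴴ * T) Ω₁ ∧ Commute (Tᴴ * T) A₁ := by
  have hd : IsUnit T.det := (Matrix.isUnit_iff_isUnit_det T).mp hT
  have hTi : T * T⁻¹ = 1 := Matrix.mul_nonsing_inv T hd
  have hiT : T⁻¹ * T = 1 := Matrix.nonsing_inv_mul T hd
  -- C₂ = C₁ * Tᴴ
  have h2' : C₂ = C₁ * Tᴴ := by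
    calc C₂ = C₂ᴴᴴ := (conjTranspose_conjTranspose C₂).symm
    _ = (T * C₁ᴴ)ᴴ := by rw [h2]
    _ = C₁ * Tᴴ := by simp [conjTranspose_mul]
  -- C₁ * (Tᴴ * T) = C₁
  have hC : C₁ * (Tᴴ * T) = C₁ := by
    have : C₁ * Tᴴ = C₁ * T⁻¹ := by rw [← h2', h3]
    calc C₁ * (Tᴴ * T) = C₁ * Tᴴ * T := by rw [Matrix.mul_assoc]
    _ = C₁ * T⁻¹ * T := by rw [this]
    _ = C₁ * (T⁻¹ * T) := by rw [Matrix.mul_assoc]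
    _ = C₁ := by rw [hiT, Matrix.mul_one]
  have hK1 : C₁ᴴ * C₁ * (Tᴴ * T) = C₁ᴴ * C₁ := by
    rw [Matrix.mul_assoc, hC]
  have hK2 : (Tᴴ * T) * (C₁ᴴ * C₁) = C₁ᴴ * C₁ := by
    have := congrArg conjTranspose hK1
    simpa [conjTranspose_mul, Matrix.mul_assoc] using this
  have comK : Commute (Tᴴ * T) (C₁ᴴ * C₁) := by
    unfold Commute SemiconjBy
    rw [hK1, hK2]
  -- C₂ᴴ * C₂ = T * (C₁ᴴ * C₁) * T⁻¹
  have hKconj : C₂ᴴ * C₂ = T * (C₁ᴴ * C₁) * T⁻¹ := by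
    rw [h2, h3]; simp [Matrix.mul_assoc]
  -- Ω₂ = T * Ω₁ * T⁻¹
  have hΩconj : Ω₂ = T * Ω₁ * T⁻¹ := by
    have e : -(Complex.I • Ω₂) - (1/2 : ℂ) • (C₂ᴴ * C₂)
        = -(Complex.I • (T * Ω₁ * T⁻¹)) - (1/2 : ℂ) • (C₂ᴴ * C₂) := by
      rw [← hA₂, h1, hA₁, hKconj]
      simp only [Matrix.sub_mul, Matrix.mul_sub, Matrix.neg_mul, Matrix.mul_neg,
        Matrix.smul_mul, Matrix.mul_smul, Matrix.mul_assoc]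
    have e2 : Complex.I • Ω₂ = Complex.I • (T * Ω₁ * T⁻¹) := by
      exact neg_injective (sub_left_inj.mp e)
    have := smul_right_injective (Matrix (Fin n) (Fin n) ℂ) (Complex.I_ne_zero) e2
    exact this
  -- Hermiticity gives commutation with Ω₁
  have comΩ : Commute (Tᴴ * T) Ω₁ := by
    have hherm : (T * Ω₁ * T⁻¹)ᴴ = T * Ω₁ * T⁻¹ := by
      rw [← hΩconj]; exact hΩ₂
    have hinvH : (T⁻¹)ᴴ = (Tᴴ)⁻¹ := Matrix.conjTranspose_nonsing_inv T
    have hexp : (Tᴴ)⁻¹ * (Ω₁ * Tᴴ) = T * Ω₁ * T⁻¹ := by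
      have : (T * Ω₁ * T⁻¹)ᴴ = (T⁻¹)ᴴ * Ω₁ᴴ * Tᴴ := by
        simp [conjTranspose_mul, Matrix.mul_assoc]
      rw [← hherm, this, hinvH, hΩ₁.eq, Matrix.mul_assoc]
    have hdH : IsUnit (Tᴴ).det := by
      rw [Matrix.det_conjTranspose]; exact hd.star
    have hTH : Tᴴ * (Tᴴ)⁻¹ = 1 := Matrix.mul_nonsing_inv Tᴴ hdH
    unfold Commute SemiconjBy
    -- goal: Tᴴ * T * Ω₁ = Ω₁ * (Tᴴ * T)
    have step : Ω₁ * Tᴴ = Tᴴ * (T * Ω₁ * T⁻¹) := by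
      calc Ω₁ * Tᴴ = 1 * (Ω₁ * Tᴴ) := (Matrix.one_mul _).symm
      _ = Tᴴ * (Tᴴ)⁻¹ * (Ω₁ * Tᴴ) := by rw [hTH]
      _ = Tᴴ * ((Tᴴ)⁻¹ * (Ω₁ * Tᴴ)) := by rw [Matrix.mul_assoc]
      _ = Tᴴ * (T * Ω₁ * T⁻¹) := by rw [hexp]
    calc Tᴴ * T * Ω₁ = Tᴴ * (T * Ω₁ * T⁻¹) * T := by
          rw [Matrix.mul_assoc, Matrix.mul_assoc, Matrix.mul_assoc]
          rw [hiT, Matrix.mul_one, ← Matrix.mul_assoc]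
    _ = Ω₁ * Tᴴ * T := by rw [← step]
    _ = Ω₁ * (Tᴴ * T) := Matrix.mul_assoc _ _ _
  refine ⟨comK, comΩ, ?_⟩
  rw [hA₁]
  unfold Commute SemiconjBy at comK comΩ ⊢
  simp only [Matrix.mul_sub, Matrix.sub_mul, Matrix.mul_neg, Matrix.neg_mul,
    Matrix.mul_smul, Matrix.smul_mul, comK, comΩ]
end

section
/- Let Ω₁, Ω₂ be n×n Hermitian matrices, C₁, C₂ be m×n matrices, A_i = -iΩ_i - (1/2)C_i†C_i. Suppose T is invertible with A₂ = TA₁T^{-1}, C₂† = TC₁†, C₂ = C₁T^{-1}, and that the observability matrix O = [C₁; C₁A₁; ...; C₁A₁ⁿ] has full column rank n. Then T is unitary, Ω₂ = TΩ₁T†, and C₂ = C₁T†. -/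
open Matrix

lemma full_rank_cancel {ι : Type*} [Fintype ι] {n p : ℕ} (M : Matrix ι (Fin n) ℂ)
    (hM : M.rank = n) (X : Matrix (Fin n) (Fin p) ℂ) (h : M * X = 0) : X = 0 := by
  have hker : LinearMap.ker M.mulVecLin = ⊥ := by
    have h1 := M.mulVecLin.finrank_range_add_finrank_ker
    rw [Matrix.rank] at hM
    rw [hM] at h1
    have hdom : Module.finrank ℂ (Fin n → ℂ) = n := by simp
    rw [hdom] at h1
    have : Module.finrank ℂ (LinearMap.ker M.mulVecLin) = 0 := by omega
    exact Submodule.finrank_eq_zero.mp this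
  ext i j
  have hv : M.mulVec (fun k => X k j) = 0 := by
    ext r
    have := congrFun (congrFun h r) j
    simpa [Matrix.mul_apply, Matrix.mulVec, dotProduct] using this
  have hm : (fun k => X k j) ∈ LinearMap.ker M.mulVecLin := hv
  rw [hker] at hm
  simpa using congrFun hm i

theorem stmt6 {n m : ℕ}
    (Ω₁ Ω₂ : Matrix (Fin n) (Fin n) ℂ) (hΩ₁ : Ω₁.IsHermitian) (hΩ₂ : Ω₂.IsHermitian)
    (C₁ C₂ : Matrix (Fin m) (Fin n) ℂ)
    (A₁ A₂ : Matrix (Fin n) (Fin n) ℂ)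
    (hA₁ : A₁ = -(Complex.I • Ω₁) - (1/2 : ℂ) • (C₁ᴴ * C₁))
    (hA₂ : A₂ = -(Complex.I • Ω₂) - (1/2 : ℂ) • (C₂ᴴ * C₂))
    (T : Matrix (Fin n) (Fin n) ℂ) (hT : IsUnit T)
    (h1 : A₂ = T * A₁ * T⁻¹) (h2 : C₂ᴴ = T * C₁ᴴ) (h3 : C₂ = C₁ * T⁻¹)
    (hrank : (Matrix.of fun (k : Fin (n+1) × Fin m) (j : Fin n) =>
        (C₁ * A₁ ^ (k.1 : ℕ)) k.2 j).rank = n) :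
    T ∈ Matrix.unitaryGroup (Fin n) ℂ ∧ Ω₂ = T * Ω₁ * Tᴴ ∧ C₂ = C₁ * Tᴴ := by
  have hdet : IsUnit T.det := (Matrix.isUnit_iff_isUnit_det T).mp hT
  have hTi : T * T⁻¹ = 1 := Matrix.mul_nonsing_inv T hdet
  have hiT : T⁻¹ * T = 1 := Matrix.nonsing_inv_mul T hdet
  have hA₁H : A₁ᴴ = Complex.I • Ω₁ - (1/2 : ℂ) • (C₁ᴴ * C₁) := by
    rw [hA₁]
    simp [conjTranspose_sub, conjTranspose_neg, conjTranspose_smul, conjTranspose_mul,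
      hΩ₁.eq, Complex.star_def, Complex.conj_I]
  have hA₂H : A₂ᴴ = Complex.I • Ω₂ - (1/2 : ℂ) • (C₂ᴴ * C₂) := by
    rw [hA₂]
    simp [conjTranspose_sub, conjTranspose_neg, conjTranspose_smul, conjTranspose_mul,
      hΩ₂.eq, Complex.star_def, Complex.conj_I]
  have hsum1 : A₁ + A₁ᴴ = -(C₁ᴴ * C₁) := by
    rw [hA₁H, hA₁]; module
  have hsum2 : A₂ + A₂ᴴ = -(C₂ᴴ * C₂) := by
    rw [hA₂H, hA₂]; module
  have hC2C2 : C₂ᴴ * C₂ = T * (C₁ᴴ * C₁) * T⁻¹ := by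
    rw [h2, h3, Matrix.mul_assoc T C₁ᴴ (C₁ * T⁻¹), ← Matrix.mul_assoc C₁ᴴ C₁ T⁻¹,
      ← Matrix.mul_assoc T (C₁ᴴ * C₁) T⁻¹]
  have hkey : T⁻¹ᴴ * A₁ᴴ * Tᴴ = T * A₁ᴴ * T⁻¹ := by
    have e1 : T * A₁ * T⁻¹ + T⁻¹ᴴ * A₁ᴴ * Tᴴ = T * A₁ * T⁻¹ + T * A₁ᴴ * T⁻¹ := by
      have h5 := hsum2
      rw [h1, hC2C2] at h5
      calc T * A₁ * T⁻¹ + T⁻¹ᴴ * A₁ᴴ * Tᴴ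
          = T * A₁ * T⁻¹ + (T * A₁ * T⁻¹)ᴴ := by
            simp [conjTranspose_mul, mul_assoc]
        _ = -(T * (C₁ᴴ * C₁) * T⁻¹) := h5
        _ = T * (-(C₁ᴴ * C₁)) * T⁻¹ := by noncomm_ring
        _ = T * (A₁ + A₁ᴴ) * T⁻¹ := by rw [hsum1]
        _ = T * A₁ * T⁻¹ + T * A₁ᴴ * T⁻¹ := by noncomm_ring
    exact add_left_cancel e1
  set S : Matrix (Fin n) (Fin n) ℂ := Tᴴ * T with hS
  have hTT : Tᴴ * T⁻¹ᴴ = 1 := by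
    rw [← conjTranspose_mul, hiT, conjTranspose_one]
  have hScomm' : A₁ᴴ * S = S * A₁ᴴ := by
    calc A₁ᴴ * S = A₁ᴴ * (Tᴴ * T) := rfl
      _ = 1 * A₁ᴴ * Tᴴ * T := by noncomm_ring
      _ = Tᴴ * T⁻¹ᴴ * A₁ᴴ * Tᴴ * T := by rw [hTT]
      _ = Tᴴ * (T⁻¹ᴴ * A₁ᴴ * Tᴴ) * T := by noncomm_ring
      _ = Tᴴ * (T * A₁ᴴ * T⁻¹) * T := by rw [hkey]
      _ = Tᴴ * T * A₁ᴴ * (T⁻¹ * T) := by noncomm_ring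
      _ = S * A₁ᴴ := by rw [hiT, mul_one]
  have hSH : Sᴴ = S := by simp [hS, conjTranspose_mul]
  have hScomm : A₁ * S = S * A₁ := by
    have := congrArg conjTranspose hScomm'
    simpa [conjTranspose_mul, hSH] using this.symm
  have hC2' : C₂ = C₁ * Tᴴ := by
    have := congrArg conjTranspose h2
    simpa [conjTranspose_mul] using this
  have hCS : C₁ * S = C₁ := by
    have e : C₁ * Tᴴ = C₁ * T⁻¹ := by rw [← hC2', h3]
    calc C₁ * S = C₁ * (Tᴴ * T) := rfl
      _ = C₁ * Tᴴ * T := (Matrix.mul_assoc C₁ Tᴴ T).symm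
      _ = C₁ * T⁻¹ * T := by rw [e]
      _ = C₁ * (T⁻¹ * T) := Matrix.mul_assoc C₁ T⁻¹ T
      _ = C₁ := by rw [hiT, Matrix.mul_one]
  have hpow : ∀ k : ℕ, A₁ ^ k * S = S * A₁ ^ k := by
    intro k
    induction k with
    | zero => simp
    | succ k ih =>
      rw [pow_succ, mul_assoc, hScomm, ← mul_assoc, ih, mul_assoc]
  have hCAk : ∀ k : ℕ, C₁ * A₁ ^ k * (S - 1) = 0 := by
    intro k
    have e : C₁ * A₁ ^ k * S = C₁ * A₁ ^ k := by
      rw [Matrix.mul_assoc C₁ (A₁ ^ k) S, hpow, ← Matrix.mul_assoc C₁ S (A₁ ^ k), hCS]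
    rw [Matrix.mul_sub, Matrix.mul_one, e, sub_self]
  have hOS : (Matrix.of fun (k : Fin (n+1) × Fin m) (j : Fin n) =>
        (C₁ * A₁ ^ (k.1 : ℕ)) k.2 j) * (S - 1) = 0 := by
    ext k j
    have := congrFun (congrFun (hCAk (k.1 : ℕ)) k.2) j
    simpa [Matrix.mul_apply] using this
  have hS1 : S = 1 := sub_eq_zero.mp (full_rank_cancel _ hrank _ hOS)
  have hS1' : Tᴴ * T = 1 := by rw [← hS]; exact hS1
  have hUnit : T ∈ Matrix.unitaryGroup (Fin n) ℂ := by
    rw [Matrix.mem_unitaryGroup_iff']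
    exact hS1'
  have hTinv : T⁻¹ = Tᴴ := Matrix.inv_eq_left_inv hS1'
  refine ⟨hUnit, ?_, hC2'⟩
  have e1 : Complex.I • Ω₂ = -A₂ - (1/2 : ℂ) • (C₂ᴴ * C₂) := by rw [hA₂]; module
  have e2 : Complex.I • Ω₁ = -A₁ - (1/2 : ℂ) • (C₁ᴴ * C₁) := by rw [hA₁]; module
  have hA2' : A₂ = T * A₁ * Tᴴ := by rw [h1, hTinv]
  have hCC' : C₂ᴴ * C₂ = T * (C₁ᴴ * C₁) * Tᴴ := by rw [hC2C2, hTinv]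
  have hI : Complex.I • Ω₂ = Complex.I • (T * Ω₁ * Tᴴ) := by
    have e3 : Complex.I • (T * Ω₁ * Tᴴ) = T * (Complex.I • Ω₁) * Tᴴ := by
      rw [Matrix.mul_smul, Matrix.smul_mul]
    rw [e3, e2, e1, hA2', hCC']
    simp only [Matrix.mul_sub, Matrix.sub_mul, Matrix.mul_neg, Matrix.neg_mul,
      Matrix.mul_smul, Matrix.smul_mul]
  exact smul_right_injective _ Complex.I_ne_zero hI
end

section
/- Let Ω, Ω' be n×n Hermitian matrices, C, C' be m×n matrices, A = -iΩ - (1/2)C†C, A' = -iΩ' - (1/2)C'†C'. If CA^kC† = C'A'^kC'† for all natural numbers k, then CΩ^kC† = C'Ω'^kC'† for all natural numbers k. -/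
open Matrix

theorem stmt8 {n m : ℕ}
    (Ω Ω' : Matrix (Fin n) (Fin n) ℂ) (hΩ : Ω.IsHermitian) (hΩ' : Ω'.IsHermitian)
    (C C' : Matrix (Fin m) (Fin n) ℂ)
    (A A' : Matrix (Fin n) (Fin n) ℂ)
    (hA : A = -(Complex.I • Ω) - (1/2 : ℂ) • (Cᴴ * C))
    (hA' : A' = -(Complex.I • Ω') - (1/2 : ℂ) • (C'ᴴ * C'))
    (h : ∀ k : ℕ, C * A ^ k * Cᴴ = C' * A' ^ k * C'ᴴ) :
    ∀ k : ℕ, C * Ω ^ k * Cᴴ = C' * Ω' ^ k * C'ᴴ := by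
  have hΩeq : Ω = Complex.I • A + (Complex.I/2) • (Cᴴ * C) := by
    rw [hA, smul_sub, smul_neg, smul_smul, Complex.I_mul_I, smul_smul]
    have : Complex.I * (1/2) = Complex.I / 2 := by ring
    rw [this, neg_one_smul, neg_neg, sub_add_cancel]
  have hΩeq' : Ω' = Complex.I • A' + (Complex.I/2) • (C'ᴴ * C') := by
    rw [hA', smul_sub, smul_neg, smul_smul, Complex.I_mul_I, smul_smul]
    have : Complex.I * (1/2) = Complex.I / 2 := by ring
    rw [this, neg_one_smul, neg_neg, sub_add_cancel]
  have key : ∀ k j : ℕ, C * Ω ^ k * A ^ j * Cᴴ = C' * Ω' ^ k * A' ^ j * C'ᴴ := by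
    intro k
    induction k with
    | zero => intro j; simpa using h j
    | succ k ih =>
      intro j
      have hΩA : Ω * A ^ j
          = Complex.I • A ^ (j+1) + (Complex.I/2) • (Cᴴ * C * A ^ j) := by
        rw [hΩeq, add_mul, smul_mul_assoc, smul_mul_assoc, pow_succ']
      have hΩA' : Ω' * A' ^ j
          = Complex.I • A' ^ (j+1) + (Complex.I/2) • (C'ᴴ * C' * A' ^ j) := by
        rw [hΩeq', add_mul, smul_mul_assoc, smul_mul_assoc, pow_succ']
      have e1 : C * Ω ^ (k+1) * A ^ j * Cᴴ
          = Complex.I • (C * Ω ^ k * A ^ (j+1) * Cᴴ)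
            + (Complex.I/2) • ((C * Ω ^ k * Cᴴ) * (C * A ^ j * Cᴴ)) := by
        rw [pow_succ]
        have h1 : C * (Ω ^ k * Ω) * A ^ j * Cᴴ = C * Ω ^ k * (Ω * A ^ j) * Cᴴ := by
          rw [Matrix.mul_assoc C, Matrix.mul_assoc (Ω ^ k), ← Matrix.mul_assoc C]
        rw [h1, hΩA]
        simp only [Matrix.mul_add, Matrix.add_mul, Matrix.mul_smul, Matrix.smul_mul,
          Matrix.mul_assoc]
      have e1' : C' * Ω' ^ (k+1) * A' ^ j * C'ᴴ
          = Complex.I • (C' * Ω' ^ k * A' ^ (j+1) * C'ᴴ)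
            + (Complex.I/2) • ((C' * Ω' ^ k * C'ᴴ) * (C' * A' ^ j * C'ᴴ)) := by
        rw [pow_succ]
        have h1 : C' * (Ω' ^ k * Ω') * A' ^ j * C'ᴴ
            = C' * Ω' ^ k * (Ω' * A' ^ j) * C'ᴴ := by
          rw [Matrix.mul_assoc C', Matrix.mul_assoc (Ω' ^ k), ← Matrix.mul_assoc C']
        rw [h1, hΩA']
        simp only [Matrix.mul_add, Matrix.add_mul, Matrix.mul_smul, Matrix.smul_mul,
          Matrix.mul_assoc]
      have ih0 : C * Ω ^ k * Cᴴ = C' * Ω' ^ k * C'ᴴ := by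
        have := ih 0; simpa using this
      rw [e1, e1', ih (j+1), ih0, h j]
  intro k
  have := key k 0
  simpa using this
end

section
/- Let κ > 0 and let Ω(θ), Ω(θ') be the 3×3 chain Hamiltonian matrices with parameters θ = (θ₁, θ₂) and θ' = (θ₁', θ₂'), and C = [√(2κ), 0, 0]. If θ₁ ≠ 0 and CΩ(θ)^kC† = CΩ(θ')^kC† for all k ≥ 0, then θ₁² = θ₁'² and θ₂² = θ₂'². -/
open Matrix

theorem stmt10 (θ₁ θ₂ θ₁' θ₂' κ : ℝ) (hκ : 0 < κ) (hθ₁ : θ₁ ≠ 0)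
    (Ω Ω' : Matrix (Fin 3) (Fin 3) ℂ)
    (hΩ : Ω = !![0, (θ₁ : ℂ), 0; (θ₁ : ℂ), 0, (θ₂ : ℂ); 0, (θ₂ : ℂ), 0])
    (hΩ' : Ω' = !![0, (θ₁' : ℂ), 0; (θ₁' : ℂ), 0, (θ₂' : ℂ); 0, (θ₂' : ℂ), 0])
    (C : Matrix (Fin 1) (Fin 3) ℂ)
    (hC : C = !![(Real.sqrt (2 * κ) : ℂ), 0, 0])
    (h : ∀ k : ℕ, C * Ω ^ k * Cᴴ = C * Ω' ^ k * Cᴴ) :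
    θ₁ ^ 2 = θ₁' ^ 2 ∧ θ₂ ^ 2 = θ₂' ^ 2 := by
  subst hΩ hΩ' hC
  have h2 := congr_fun (congr_fun (h 2) 0) 0
  have h4 := congr_fun (congr_fun (h 4) 0) 0
  simp [pow_succ, Matrix.mul_apply, Fin.sum_univ_succ, Matrix.conjTranspose_apply] at h2 h4
  have hs : Real.sqrt κ ≠ 0 := Real.sqrt_ne_zero'.2 hκ
  have e2 : θ₁ * θ₁ = θ₁' * θ₁' := by exact_mod_cast h2.resolve_right hs
  have e4 : (θ₁ * θ₁ * θ₁ + θ₁ * θ₂ * θ₂) * θ₁ = (θ₁' * θ₁' * θ₁' + θ₁' * θ₂' * θ₂') * θ₁' := by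
    exact_mod_cast h4.resolve_right hs
  have h1 : θ₁ ^ 2 = θ₁' ^ 2 := by nlinarith
  refine ⟨h1, ?_⟩
  have hne : θ₁ ^ 2 ≠ 0 := pow_ne_zero 2 hθ₁
  have : θ₁ ^ 2 * θ₂ ^ 2 = θ₁ ^ 2 * θ₂' ^ 2 := by nlinarith [sq_nonneg θ₁]
  exact mul_left_cancel₀ hne this
end

section
/- Let Δ ≠ 0, κ > 0 and let Ω(θ) be the 3×3 tree Hamiltonian (Ω₁₂ = θ₁, Ω₁₃ = θ₂, Ω₂₂ = Δ, zeros elsewhere) and C = [√(2κ), 0, 0]. If CΩ(θ)^kC† = CΩ(θ')^kC† for k = 2, 3, 4 (with the same Δ), then θ₁² = θ₁'² and θ₂² = θ₂'². -/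
open Matrix

theorem stmt12 (θ₁ θ₂ θ₁' θ₂' Δ κ : ℝ) (hκ : 0 < κ) (hΔ : Δ ≠ 0)
    (Ω Ω' : Matrix (Fin 3) (Fin 3) ℂ)
    (hΩ : Ω = !![0, (θ₁ : ℂ), (θ₂ : ℂ); (θ₁ : ℂ), (Δ : ℂ), 0; (θ₂ : ℂ), 0, 0])
    (hΩ' : Ω' = !![0, (θ₁' : ℂ), (θ₂' : ℂ); (θ₁' : ℂ), (Δ : ℂ), 0; (θ₂' : ℂ), 0, 0])
    (C : Matrix (Fin 1) (Fin 3) ℂ)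
    (hC : C = !![(Real.sqrt (2 * κ) : ℂ), 0, 0])
    (h : ∀ k : ℕ, k = 2 ∨ k = 3 ∨ k = 4 → C * Ω ^ k * Cᴴ = C * Ω' ^ k * Cᴴ) :
    θ₁ ^ 2 = θ₁' ^ 2 ∧ θ₂ ^ 2 = θ₂' ^ 2 := by
  have e2 := congrFun (congrFun (h 2 (by norm_num)) 0) 0
  have e3 := congrFun (congrFun (h 3 (by norm_num)) 0) 0
  rw [hΩ, hΩ', hC] at e2 e3
  norm_num [pow_succ, Matrix.mul_fin_three, Matrix.mul_apply, Fin.sum_univ_three,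
    Fin.sum_univ_one, Matrix.conjTranspose_apply, Complex.conj_ofReal] at e2 e3
  simp only [Matrix.cons_val_two, Matrix.tail_cons, Matrix.head_cons] at e2 e3
  norm_num at e2 e3
  have hκ' : Real.sqrt κ ≠ 0 := by positivity
  have e2' : (θ₁:ℂ) * θ₁ + θ₂ * θ₂ = θ₁' * θ₁' + θ₂' * θ₂' := e2.resolve_right hκ'
  have e3' : (θ₁:ℂ) * Δ * θ₁ = θ₁' * Δ * θ₁' := e3.resolve_right hκ'
  have r2 : θ₁ * θ₁ + θ₂ * θ₂ = θ₁' * θ₁' + θ₂' * θ₂' := by exact_mod_cast e2'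
  have r3 : θ₁ * Δ * θ₁ = θ₁' * Δ * θ₁' := by exact_mod_cast e3'
  have h1 : θ₁ ^ 2 = θ₁' ^ 2 := by
    have : Δ * θ₁ ^ 2 = Δ * θ₁' ^ 2 := by ring_nf; ring_nf at r3; linarith
    have := mul_left_cancel₀ hΔ this
    exact this
  refine ⟨h1, ?_⟩
  nlinarith [h1, r2]
end

section
/- Let Ω(θ) be the 4×4 ring Hamiltonian matrix with Ω₁₂ = θ₁, Ω₁₃ = θ₂, Ω₂₄ = θ₃, Ω₃₄ = θ₄ (symmetric, zeros elsewhere), C = [√(2κ), 0, 0, 0], and let U be a 2×2 unitary matrix with U(θ₁, θ₂)ᵀ = (θ₁', θ₂')ᵀ and U(θ₃, θ₄)ᵀ = (θ₃', θ₄')ᵀ. Then T = diag(1, U, 1) (block diagonal 4×4 unitary) satisfies CT† = C and TΩ(θ)T† = Ω(θ'). -/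
open Matrix

set_option maxHeartbeats 1000000 in
theorem stmt13 (θ₁ θ₂ θ₃ θ₄ θ₁' θ₂' θ₃' θ₄' κ : ℝ) (hκ : 0 < κ)
    (Ω Ω' : Matrix (Fin 4) (Fin 4) ℂ)
    (hΩ : Ω = !![0, (θ₁ : ℂ), (θ₂ : ℂ), 0;
                 (θ₁ : ℂ), 0, 0, (θ₃ : ℂ);
                 (θ₂ : ℂ), 0, 0, (θ₄ : ℂ);
                 0, (θ₃ : ℂ), (θ₄ : ℂ), 0])
    (hΩ' : Ω' = !![0, (θ₁' : ℂ), (θ₂' : ℂ), 0;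
                   (θ₁' : ℂ), 0, 0, (θ₃' : ℂ);
                   (θ₂' : ℂ), 0, 0, (θ₄' : ℂ);
                   0, (θ₃' : ℂ), (θ₄' : ℂ), 0])
    (C : Matrix (Fin 1) (Fin 4) ℂ)
    (hC : C = !![(Real.sqrt (2 * κ) : ℂ), 0, 0, 0])
    (U : Matrix (Fin 2) (Fin 2) ℂ) (hU : U ∈ Matrix.unitaryGroup (Fin 2) ℂ)
    (hU1 : U.mulVec ![(θ₁ : ℂ), (θ₂ : ℂ)] = ![(θ₁' : ℂ), (θ₂' : ℂ)])
    (hU2 : U.mulVec ![(θ₃ : ℂ), (θ₄ : ℂ)] = ![(θ₃' : ℂ), (θ₄' : ℂ)])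
    (T : Matrix (Fin 4) (Fin 4) ℂ)
    (hT : T = !![1, 0, 0, 0;
                 0, U 0 0, U 0 1, 0;
                 0, U 1 0, U 1 1, 0;
                 0, 0, 0, 1]) :
    C * Tᴴ = C ∧ T * Ω * Tᴴ = Ω' := by
  have e1 := congrFun hU1 0
  have e2 := congrFun hU1 1
  have e3 := congrFun hU2 0
  have e4 := congrFun hU2 1
  simp [Matrix.mulVec, dotProduct, Fin.sum_univ_two] at e1 e2 e3 e4
  have c1 := congrArg (starRingEnd ℂ) e1
  have c2 := congrArg (starRingEnd ℂ) e2
  have c3 := congrArg (starRingEnd ℂ) e3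
  have c4 := congrArg (starRingEnd ℂ) e4
  simp [map_add, _root_.map_mul, Complex.conj_ofReal] at c1 c2 c3 c4
  subst hΩ hΩ' hC hT
  constructor
  · ext i j
    fin_cases i <;> fin_cases j <;>
      simp [Matrix.mul_apply, Fin.sum_univ_four, Matrix.conjTranspose_apply]
  · ext i j
    fin_cases i <;> fin_cases j <;>
      simp [Matrix.mul_apply, Fin.sum_univ_four, Matrix.conjTranspose_apply] <;>
      first
        | rfl
        | linear_combination e1 | linear_combination e2
        | linear_combination e3 | linear_combination e4
        | linear_combination c1 | linear_combination c2
        | linear_combination c3 | linear_combination c4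
end

section
/- For the 3×3 chain system with Ω(θ) tridiagonal (Ω₁₂ = θ₁, Ω₂₃ = θ₂), C = [√(2κ), 0, 0], and A = -iΩ - (1/2)C†C, the transfer function satisfies Ξ(s) = 1 - C(sI - A)^{-1}C† = (s³ - κs² + (θ₁² + θ₂²)s - κθ₂²)/(s³ + κs² + (θ₁² + θ₂²)s + κθ₂²) for all s where sI - A is invertible. -/
open Matrix

theorem stmt18 (θ₁ θ₂ κ : ℝ) (hκ : 0 < κ)
    (Ω : Matrix (Fin 3) (Fin 3) ℂ)
    (hΩ : Ω = !![0, (θ₁ : ℂ), 0; (θ₁ : ℂ), 0, (θ₂ : ℂ); 0, (θ₂ : ℂ), 0])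
    (C : Matrix (Fin 1) (Fin 3) ℂ)
    (hC : C = !![(Real.sqrt (2 * κ) : ℂ), 0, 0])
    (A : Matrix (Fin 3) (Fin 3) ℂ)
    (hA : A = -(Complex.I • Ω) - (1/2 : ℂ) • (Cᴴ * C)) :
    ∀ s : ℂ, IsUnit (s • (1 : Matrix (Fin 3) (Fin 3) ℂ) - A) →
      ((1 : Matrix (Fin 1) (Fin 1) ℂ)
          - C * (s • (1 : Matrix (Fin 3) (Fin 3) ℂ) - A)⁻¹ * Cᴴ) 0 0
        = (s ^ 3 - (κ : ℂ) * s ^ 2 + ((θ₁ : ℂ) ^ 2 + (θ₂ : ℂ) ^ 2) * s - (κ : ℂ) * (θ₂ : ℂ) ^ 2)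
          / (s ^ 3 + (κ : ℂ) * s ^ 2 + ((θ₁ : ℂ) ^ 2 + (θ₂ : ℂ) ^ 2) * s + (κ : ℂ) * (θ₂ : ℂ) ^ 2) := by
  intro s hs
  have h2κ : (Real.sqrt (2 * κ) : ℂ) * (Real.sqrt (2 * κ) : ℂ) = 2 * κ := by
    rw [← Complex.ofReal_mul, Real.mul_self_sqrt (by positivity)]
    push_cast; ring
  have h2 : ((Real.sqrt 2 : ℂ)) ^ 2 = 2 := by
    rw [sq, ← Complex.ofReal_mul, Real.mul_self_sqrt (by norm_num)]; norm_num
  have hκ2 : ((Real.sqrt κ : ℂ)) ^ 2 = κ := by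
    rw [sq, ← Complex.ofReal_mul, Real.mul_self_sqrt hκ.le]
  have hM : s • (1 : Matrix (Fin 3) (Fin 3) ℂ) - A =
      !![s + κ, Complex.I * θ₁, 0; Complex.I * θ₁, s, Complex.I * θ₂;
         0, Complex.I * θ₂, s] := by
    subst hΩ hC hA
    ext i j
    fin_cases i <;> fin_cases j <;>
      simp [Matrix.mul_apply, Fin.sum_univ_succ, Matrix.one_apply, h2κ] <;> ring_nf <;> simp [h2, hκ2] <;> ring
  rw [hM] at hs ⊢
  have hdet : (!![s + κ, Complex.I * θ₁, 0; Complex.I * θ₁, s, Complex.I * θ₂;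
      0, Complex.I * θ₂, s] : Matrix (Fin 3) (Fin 3) ℂ).det
      = s ^ 3 + (κ : ℂ) * s ^ 2 + ((θ₁ : ℂ) ^ 2 + (θ₂ : ℂ) ^ 2) * s + (κ : ℂ) * (θ₂ : ℂ) ^ 2 := by
    simp [Matrix.det_fin_three]
    ring_nf
    simp [Complex.I_sq]
  have hdne : s ^ 3 + (κ : ℂ) * s ^ 2 + ((θ₁ : ℂ) ^ 2 + (θ₂ : ℂ) ^ 2) * s + (κ : ℂ) * (θ₂ : ℂ) ^ 2 ≠ 0 := by
    rw [← hdet]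
    exact ((Matrix.isUnit_iff_isUnit_det _).mp hs).ne_zero
  rw [Matrix.inv_def, hC]
  rw [Matrix.adjugate_fin_three]
  simp [Matrix.sub_apply, Matrix.mul_apply, Fin.sum_univ_succ, Matrix.smul_apply,
    Matrix.one_apply, Ring.inverse_eq_inv', hdet, Matrix.vecMul, dotProduct,
    Matrix.conjTranspose_apply]
  rw [eq_div_iff hdne]
  field_simp
  ring_nf
  rw [h2, hκ2]
  ring_nf
  simp [Complex.I_sq]
  ring
  have hdne' : s * (θ₁ : ℂ) ^ 2 + s * (θ₂ : ℂ) ^ 2 + s ^ 2 * (κ : ℂ) + s ^ 3 + (θ₂ : ℂ) ^ 2 * (κ : ℂ) ≠ 0 := by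
    convert hdne using 1; ring
  linear_combination (-2 * (κ : ℂ) * (s ^ 2 + (θ₂ : ℂ) ^ 2)) * mul_inv_cancel₀ hdne'
end
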